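/- Let X be a real random variable such that G_X(0, β) < ∞ for all β in some open interval containing 1, and let n ∈ ℕ₀. Then the function β ↦ G_X(0, β) is n times differentiable at β = 1 and 𝒞ℛℰ_n(X) = ((−1)^n / n!) · (∂^n/∂β^n) G_X(0, β)|_{β=1}. -/

import Mathlib

open MeasureTheory ProbabilityTheory Set

/-- The (essential) support interval of a CDF `F`: the set where `0 < F x < 1`,
which coincides (up to endpoints) with the interval `(l, r)` where
`l = inf {x : F x > 0}` and `r = sup {x : 1 - F x > 0}`. -/
def cigfSupport (F : ℝ → ℝ) : Set ℝ := {x | 0 < F x ∧ F x < 1}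

/-- The cumulative information generating function
`G_X(α, β) = ∫_l^r F(x)^α (1 - F(x))^β dx`. -/
noncomputable def cigf (F : ℝ → ℝ) (α β : ℝ) : ℝ :=
  ∫ x in cigfSupport F, F x ^ α * (1 - F x) ^ β

/-- `(α, β) ∈ D_X`, i.e. `G_X(α, β) < ∞`. -/
def memD (F : ℝ → ℝ) (α β : ℝ) : Prop :=
  IntegrableOn (fun x => F x ^ α * (1 - F x) ^ β) (cigfSupport F)

/-- The CDF of a random variable `X` under the probability measure `P`. -/
noncomputable def rvCDF {Ω : Type*} [MeasurableSpace Ω] (P : Measure Ω) (X : Ω → ℝ) (x : ℝ) : ℝ :=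
  (P {ω | X ω ≤ x}).toReal

/-- The CDF of a probability measure on `ℝ`. -/
noncomputable def cdfOf (μ : Measure ℝ) (x : ℝ) : ℝ := (μ (Iic x)).toReal

/-!
On the support, `u = 1 - F` takes values in `(0, 1]`. For such `t` the inequality
`|log t| * t ^ δ < 1 / δ` dominates `t ^ β * |log t| ^ k`, locally uniformly in `β ∈ (a, b)`, by a
multiple of `t ^ c` with `a < c < β`, which is integrable by hypothesis. Differentiation under the
integral sign then gives `∂ᵏ/∂βᵏ G_X(0, β) = ∫ u ^ β (log u) ^ k`, and at `β = 1` this is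
`(-1) ^ k k! 𝒞ℛℰ_k(X)`.
-/

open Real Metric
open scoped ContDiff

lemma rpow_mul_abs_log_pow_le {t : ℝ} (ht : t ∈ Ioc (0 : ℝ) 1) {c δ β : ℝ} (hδ : 0 < δ)
    (k : ℕ) (hβ : c + δ * k ≤ β) : t ^ β * |log t| ^ k ≤ δ⁻¹ ^ k * t ^ c := by
  have hlog : |log t| * t ^ δ ≤ δ⁻¹ := by
    have := abs_log_mul_self_rpow_lt t δ ht.1 ht.2 hδ
    rw [abs_mul, abs_of_pos (rpow_pos_of_pos ht.1 δ), one_div] at this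
    exact this.le
  calc t ^ β * |log t| ^ k
      ≤ t ^ (c + δ * k) * |log t| ^ k :=
        mul_le_mul_of_nonneg_right (rpow_le_rpow_of_exponent_ge ht.1 ht.2 hβ)
          (by positivity)
    _ = (|log t| * t ^ δ) ^ k * t ^ c := by
        rw [rpow_add ht.1, rpow_mul ht.1.le, rpow_natCast]
        ring
    _ ≤ δ⁻¹ ^ k * t ^ c := by
        have : 0 ≤ |log t| * t ^ δ := mul_nonneg (abs_nonneg _) (rpow_nonneg ht.1.le δ)
        exact mul_le_mul_of_nonneg_right (pow_le_pow_left₀ this hlog k) (rpow_nonneg ht.1.le c)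

lemma exists_rpow_mul_abs_log_pow_le {a β₀ : ℝ} (h : a < β₀) (k : ℕ) :
    ∃ c ∈ Ioo a β₀, ∃ C ε : ℝ, 0 < ε ∧
      ∀ β ∈ ball β₀ ε, ∀ t ∈ Ioc (0 : ℝ) 1, t ^ β * |log t| ^ k ≤ C * t ^ c := by
  obtain ⟨ε, hεdef⟩ : ∃ ε : ℝ, ε = (β₀ - a) / 3 := ⟨_, rfl⟩
  have hε : 0 < ε := by rw [hεdef]; linarith
  have hk : (0 : ℝ) < k + 1 := by positivity
  refine ⟨a + ε, ⟨by linarith, by linarith⟩, (ε / (k + 1))⁻¹ ^ k, ε, hε, fun β hβ t ht =>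
    rpow_mul_abs_log_pow_le ht (div_pos hε hk) k ?_⟩
  have hδk : ε / (k + 1) * k ≤ ε := by
    rw [div_mul_eq_mul_div, div_le_iff₀ hk]
    nlinarith
  have := (abs_lt.1 (mem_ball.1 hβ)).1
  linarith

section PowLogIntegral

variable {α : Type*} [MeasurableSpace α] {μ : Measure α} {u : α → ℝ} {a b : ℝ}

noncomputable def powLogIntegral (μ : Measure α) (u : α → ℝ) (k : ℕ) (β : ℝ) : ℝ :=
  ∫ x, u x ^ β * log (u x) ^ k ∂μ

lemma aestronglyMeasurable_rpow_mul_log_pow (hu : AEMeasurable u μ) (β : ℝ) (k : ℕ) :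
    AEStronglyMeasurable (fun x => u x ^ β * log (u x) ^ k) μ :=
  ((hu.pow_const β).mul ((measurable_log.comp_aemeasurable hu).pow_const k)).aestronglyMeasurable

variable (hu : AEMeasurable u μ) (hu01 : ∀ᵐ x ∂μ, u x ∈ Ioc (0 : ℝ) 1)
  (hint : ∀ β ∈ Ioo a b, Integrable (fun x => u x ^ β) μ)
include hu hu01 hint

lemma integrable_rpow_mul_log_pow (k : ℕ) {β : ℝ} (hβ : β ∈ Ioo a b) :
    Integrable (fun x => u x ^ β * log (u x) ^ k) μ := by
  obtain ⟨c, hc, C, ε, hε, hle⟩ := exists_rpow_mul_abs_log_pow_le hβ.1 k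
  refine ((hint c ⟨hc.1, hc.2.trans hβ.2⟩).const_mul C).mono'
    (aestronglyMeasurable_rpow_mul_log_pow hu β k) ?_
  filter_upwards [hu01] with x hx
  rw [norm_mul, norm_pow, norm_eq_abs, norm_eq_abs, abs_of_nonneg (rpow_nonneg hx.1.le β)]
  exact hle β (mem_ball_self hε) _ hx

lemma hasDerivAt_powLogIntegral (k : ℕ) {β₀ : ℝ} (hβ₀ : β₀ ∈ Ioo a b) :
    HasDerivAt (powLogIntegral μ u k) (powLogIntegral μ u (k + 1) β₀) β₀ := by
  obtain ⟨c, hc, C, ε, hε, hle⟩ := exists_rpow_mul_abs_log_pow_le hβ₀.1 (k + 1)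
  refine (hasDerivAt_integral_of_dominated_loc_of_deriv_le
    (F' := fun β x => u x ^ β * log (u x) ^ (k + 1)) (ball_mem_nhds β₀ hε)
    (.of_forall fun β => aestronglyMeasurable_rpow_mul_log_pow hu β k)
    (integrable_rpow_mul_log_pow hu hu01 hint k hβ₀)
    (aestronglyMeasurable_rpow_mul_log_pow hu β₀ (k + 1))
    (bound := fun x => C * u x ^ c) ?_ ((hint c ⟨hc.1, hc.2.trans hβ₀.2⟩).const_mul C) ?_).2
  · filter_upwards [hu01] with x hx β hβ
    rw [norm_mul, norm_pow, norm_eq_abs, norm_eq_abs, abs_of_nonneg (rpow_nonneg hx.1.le β)]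
    exact hle β hβ _ hx
  · filter_upwards [hu01] with x hx β _
    refine ((hasStrictDerivAt_const_rpow hx.1 β).hasDerivAt.mul_const
      (log (u x) ^ k)).congr_deriv ?_
    ring

end PowLogIntegral

section DerivativeTower

variable {G : ℕ → ℝ → ℝ} {s : Set ℝ}

lemma iteratedDeriv_eqOn_of_hasDerivAt_succ (hs : IsOpen s)
    (hG : ∀ k, ∀ x ∈ s, HasDerivAt (G k) (G (k + 1) x) x) (k : ℕ) :
    EqOn (iteratedDeriv k (G 0)) (G k) s := by
  induction k with
  | zero => exact fun _ _ => rfl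
  | succ k ih =>
    intro x hx
    rw [iteratedDeriv_succ, (Filter.eventuallyEq_of_mem (hs.mem_nhds hx) ih).deriv_eq]
    exact (hG k x hx).deriv

lemma contDiffOn_of_hasDerivAt_succ (hs : IsOpen s)
    (hG : ∀ k, ∀ x ∈ s, HasDerivAt (G k) (G (k + 1) x) x) : ContDiffOn ℝ ∞ (G 0) s :=
  contDiffOn_of_differentiableOn_deriv fun m _ x hx => by
    have hm : EqOn (iteratedDerivWithin m (G 0) s) (G m) s :=
      (iteratedDerivWithin_of_isOpen hs).trans (iteratedDeriv_eqOn_of_hasDerivAt_succ hs hG m)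
    exact (hG m x hx).differentiableAt.differentiableWithinAt.congr hm (hm hx)

end DerivativeTower

lemma measurableSet_cigfSupport {F : ℝ → ℝ} (hF : Measurable F) :
    MeasurableSet (cigfSupport F) :=
  (measurableSet_lt measurable_const hF).inter (measurableSet_lt hF measurable_const)

lemma monotone_rvCDF {Ω : Type*} [MeasurableSpace Ω] (P : Measure Ω) [IsFiniteMeasure P]
    (X : Ω → ℝ) : Monotone (rvCDF P X) := fun _ _ hxy =>
  ENNReal.toReal_mono (measure_ne_top P _) (measure_mono fun _ hω => le_trans hω hxy)

theorem stmt6_general {Ω : Type*} [MeasurableSpace Ω] (P : Measure Ω) [IsProbabilityMeasure P]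
    (X : Ω → ℝ) (n : ℕ)
    (a b : ℝ) (ha : a < 1) (hb : 1 < b)
    (hfin : ∀ β ∈ Ioo a b, memD (rvCDF P X) 0 β) :
    ContDiffAt ℝ n (fun β => cigf (rvCDF P X) 0 β) 1 ∧
    (n.factorial : ℝ)⁻¹ *
        ∫ x in cigfSupport (rvCDF P X),
          (1 - rvCDF P X x) * (-Real.log (1 - rvCDF P X x)) ^ n =
      ((-1 : ℝ) ^ n / (n.factorial : ℝ)) *
        iteratedDeriv n (fun β => cigf (rvCDF P X) 0 β) 1 := by
  set F := rvCDF P X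
  set μ := volume.restrict (cigfSupport F)
  have hFmeas : Measurable F := (monotone_rvCDF P X).measurable
  have hu01 : ∀ᵐ x ∂μ, 1 - F x ∈ Ioc (0 : ℝ) 1 := by
    filter_upwards [ae_restrict_mem (measurableSet_cigfSupport hFmeas)] with x hx
    exact ⟨sub_pos.2 hx.2, by linarith [hx.1]⟩
  have hint : ∀ β ∈ Ioo a b, IntegrableOn (fun x => (1 - F x) ^ β) (cigfSupport F) :=
    fun β hβ => by simpa [memD] using hfin β hβ
  have hG := fun k β hβ => hasDerivAt_powLogIntegral (u := fun x => 1 - F x)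
    (measurable_const.sub hFmeas).aemeasurable hu01 hint k (β₀ := β) hβ
  have hcigf : (fun β => cigf F 0 β) = powLogIntegral μ (fun x => 1 - F x) 0 := by
    ext β
    simp [cigf, powLogIntegral, μ]
  refine ⟨?_, ?_⟩
  · rw [hcigf]
    exact ((contDiffOn_of_hasDerivAt_succ isOpen_Ioo hG).contDiffAt
      (Ioo_mem_nhds ha hb)).of_le (by exact_mod_cast le_top)
  · rw [hcigf, iteratedDeriv_eqOn_of_hasDerivAt_succ isOpen_Ioo hG n ⟨ha, hb⟩, powLogIntegral]
    have hsign : ∀ t : ℝ, t * (-log t) ^ n = (-1) ^ n * (t ^ (1 : ℝ) * log t ^ n) := fun t => by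
      rw [rpow_one, neg_pow]
      ring
    simp_rw [hsign, integral_const_mul]
    ring

/-- If `G_X(0, β) < ∞` for all `β` in an open interval containing `1`, then
`β ↦ G_X(0, β)` is `n` times differentiable at `β = 1` and
`𝒞ℛℰ_n(X) = ((-1)^n / n!) ∂^n/∂β^n G_X(0, β) |_{β=1}`. -/
theorem stmt6 {Ω : Type*} [MeasurableSpace Ω] (P : Measure Ω) [IsProbabilityMeasure P]
    (X : Ω → ℝ) (hX : Measurable X) (n : ℕ)
    (a b : ℝ) (ha : a < 1) (hb : 1 < b)
    (hfin : ∀ β ∈ Ioo a b, memD (rvCDF P X) 0 β) :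
    ContDiffAt ℝ n (fun β => cigf (rvCDF P X) 0 β) 1 ∧
    (n.factorial : ℝ)⁻¹ *
        ∫ x in cigfSupport (rvCDF P X),
          (1 - rvCDF P X x) * (-Real.log (1 - rvCDF P X x)) ^ n =
      ((-1 : ℝ) ^ n / (n.factorial : ℝ)) *
        iteratedDeriv n (fun β => cigf (rvCDF P X) 0 β) 1 :=
  stmt6_general P X n a b ha hb hfin
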